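/- For every integer m ≥ 1 there exists a polynomial expression Φ, namely a ℂ-linear combination of the monomials Φ₁^a Φ₃^b Φ₅^c with nonnegative integers a,b,c satisfying 0 < a + 2b + 3c ≤ m, such that δ_q^m(P) = P·Φ in ℂ[[q]], where δ_q = q·d/dq. -/

import Mathlib

open PowerSeries Finset

noncomputable section

/-- `P = Σ_{n≥0} p(n) qⁿ ∈ ℂ[[q]]`, where `p(n)` is the number of partitions of `n`. -/
def Pser : PowerSeries ℂ := PowerSeries.mk fun n => (Fintype.card (Nat.Partition n) : ℂ)

/-- `Φ_j = Σ_{n≥1} σ_j(n) qⁿ ∈ ℂ[[q]]`, where `σ_j(n) = Σ_{d ∣ n} d^j`. -/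
def Phi (j : ℕ) : PowerSeries ℂ :=
  PowerSeries.mk fun n => if n = 0 then 0 else ∑ d ∈ n.divisors, (d : ℂ) ^ j

/-- The operator `δ_q = q·d/dq` on `ℂ[[q]]`: it multiplies the coefficient of `qⁿ` by `n`. -/
def Dq (F : PowerSeries ℂ) : PowerSeries ℂ :=
  PowerSeries.mk fun n => (n : ℂ) * PowerSeries.coeff n F

namespace Aux9

/-- `σ_j(n)` as a complex number, with `sg j 0 = 0`. -/
def sg (j n : ℕ) : ℂ := ∑ d ∈ n.divisors, (d : ℂ) ^ j

lemma sg_zero (j : ℕ) : sg j 0 = 0 := by simp [sg]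

lemma coeff_Phi (j n : ℕ) : PowerSeries.coeff n (Phi j) = sg j n := by
  rcases eq_or_ne n 0 with rfl | h
  · simp [Phi, sg]
  · simp [Phi, sg, h]

/-- Quadruples `((a,x),(b,y))`, all entries positive, with `a*x + b*y = n`. -/
def Qd (n : ℕ) : Finset ((ℕ × ℕ) × ℕ × ℕ) :=
  ((Finset.Icc 1 n ×ˢ Finset.Icc 1 n) ×ˢ (Finset.Icc 1 n ×ˢ Finset.Icc 1 n)).filter
    (fun p => p.1.1 * p.1.2 + p.2.1 * p.2.2 = n)

lemma mem_Qd {n : ℕ} {p : (ℕ × ℕ) × ℕ × ℕ} :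
    p ∈ Qd n ↔ 0 < p.1.1 ∧ 0 < p.1.2 ∧ 0 < p.2.1 ∧ 0 < p.2.2 ∧
      p.1.1 * p.1.2 + p.2.1 * p.2.2 = n := by
  obtain ⟨⟨a, x⟩, b, y⟩ := p
  simp only [Qd, Finset.mem_filter, Finset.mem_product, Finset.mem_Icc]
  constructor
  · rintro ⟨⟨⟨⟨ha, _⟩, _, _⟩, ⟨hb, _⟩, _, _⟩, h⟩
    exact ⟨by omega, by omega, by omega, by omega, h⟩
  · rintro ⟨ha, hx, hb, hy, h⟩
    have h1 : a * 1 ≤ a * x := Nat.mul_le_mul_left a hx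
    have h2 : 1 * x ≤ a * x := Nat.mul_le_mul_right x ha
    have h3 : b * 1 ≤ b * y := Nat.mul_le_mul_left b hy
    have h4 : 1 * y ≤ b * y := Nat.mul_le_mul_right y hb
    simp only [mul_one, one_mul] at h1 h2 h3 h4
    exact ⟨⟨⟨⟨ha, by omega⟩, hx, by omega⟩, ⟨hb, by omega⟩, hy, by omega⟩, h⟩

/-- the double convolution sum `Σ_{ax+by=n} a^j b^k`. -/
def Sc (j k n : ℕ) : ℂ := ∑ p ∈ Qd n, (p.1.1 : ℂ) ^ j * (p.2.1 : ℂ) ^ k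

lemma sg_eq_sum_DA (j i : ℕ) : sg j i = ∑ u ∈ i.divisorsAntidiagonal, (u.1 : ℂ) ^ j := by
  rw [Nat.sum_divisorsAntidiagonal (fun d _ => (d : ℂ) ^ j)]
  rfl

lemma Sc_eq (j k n : ℕ) :
    ∑ il ∈ Finset.HasAntidiagonal.antidiagonal n, sg j il.1 * sg k il.2 = Sc j k n := by
  have : ∀ il : ℕ × ℕ, sg j il.1 * sg k il.2
      = ∑ uv ∈ il.1.divisorsAntidiagonal ×ˢ il.2.divisorsAntidiagonal,
          (uv.1.1 : ℂ) ^ j * (uv.2.1 : ℂ) ^ k := by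
    intro il
    rw [sg_eq_sum_DA, sg_eq_sum_DA, Finset.sum_mul_sum]
    rw [Finset.sum_product]
  have hsig := Finset.sum_sigma (antidiagonal n)
    (fun il => il.1.divisorsAntidiagonal ×ˢ il.2.divisorsAntidiagonal)
    (fun q => (q.2.1.1 : ℂ) ^ j * (q.2.2.1 : ℂ) ^ k)
  rw [Finset.sum_congr rfl fun il _ => this il, ← hsig]
  refine Finset.sum_nbij' (fun q => q.2) (fun p => ⟨(p.1.1 * p.1.2, p.2.1 * p.2.2), p⟩)
    ?_ ?_ ?_ ?_ ?_
  · rintro ⟨⟨i, l⟩, ⟨⟨a, x⟩, b, y⟩⟩ hq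
    simp only [Finset.mem_sigma, Finset.HasAntidiagonal.mem_antidiagonal, Finset.mem_product,
      Nat.mem_divisorsAntidiagonal] at hq
    obtain ⟨hil, ⟨hax, hi0⟩, hby, hl0⟩ := hq
    have ha : 0 < a := Nat.pos_of_ne_zero (by rintro rfl; simp_all)
    have hx : 0 < x := Nat.pos_of_ne_zero (by rintro rfl; simp_all)
    have hb : 0 < b := Nat.pos_of_ne_zero (by rintro rfl; simp_all)
    have hy : 0 < y := Nat.pos_of_ne_zero (by rintro rfl; simp_all)
    simp only [mem_Qd]
    exact ⟨ha, hx, hb, hy, by rw [hax, hby]; exact hil⟩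
  · rintro ⟨⟨a, x⟩, b, y⟩ hp
    rw [mem_Qd] at hp
    dsimp only at hp ⊢
    obtain ⟨ha, hx, hb, hy, h⟩ := hp
    simp only [Finset.mem_sigma, Finset.HasAntidiagonal.mem_antidiagonal, Finset.mem_product,
      Nat.mem_divisorsAntidiagonal]
    refine ⟨h, ⟨trivial, Nat.mul_ne_zero (by omega) (by omega)⟩,
      trivial, Nat.mul_ne_zero (by omega) (by omega)⟩
  · rintro ⟨⟨i, l⟩, ⟨⟨a, x⟩, b, y⟩⟩ hq
    simp only [Finset.mem_sigma, Finset.HasAntidiagonal.mem_antidiagonal, Finset.mem_product,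
      Nat.mem_divisorsAntidiagonal] at hq
    obtain ⟨hil, ⟨hax, hi0⟩, hby, hl0⟩ := hq
    simp [hax, hby]
  · rintro p _; rfl
  · rintro q _; rfl

lemma mem_Qd' {n a x b y : ℕ} :
    ((a, x), (b, y)) ∈ Qd n ↔ 0 < a ∧ 0 < x ∧ 0 < b ∧ 0 < y ∧ a * x + b * y = n :=
  mem_Qd


lemma master (n : ℕ) (f : ℕ → ℕ → ℕ → ℕ → ℂ) :
    ∑ p ∈ Qd n, f p.1.1 p.1.2 p.2.1 p.2.2
      = (∑ d ∈ n.divisorsAntidiagonal, ∑ a ∈ Finset.Ico 1 d.1, f a d.2 (d.1 - a) d.2)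
        + ∑ p ∈ (Qd n).filter (fun p => p.1.1 < p.2.1),
            (f p.1.1 (p.1.2 + p.2.2) (p.2.1 - p.1.1) p.2.2
             + f (p.2.1 - p.1.1) p.2.2 p.1.1 (p.1.2 + p.2.2)) := by
  classical
  have hsplit : ∑ p ∈ Qd n, f p.1.1 p.1.2 p.2.1 p.2.2
      = ∑ p ∈ (Qd n).filter (fun p => p.1.2 = p.2.2), f p.1.1 p.1.2 p.2.1 p.2.2
        + (∑ p ∈ (Qd n).filter (fun p => p.2.2 < p.1.2), f p.1.1 p.1.2 p.2.1 p.2.2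
        + ∑ p ∈ (Qd n).filter (fun p => p.1.2 < p.2.2), f p.1.1 p.1.2 p.2.1 p.2.2) := by
    rw [← Finset.sum_filter_add_sum_filter_not (Qd n) (fun p => p.1.2 = p.2.2)]
    congr 1
    rw [← Finset.sum_filter_add_sum_filter_not ((Qd n).filter (fun p => ¬p.1.2 = p.2.2))
      (fun p => p.2.2 < p.1.2), Finset.filter_filter, Finset.filter_filter]
    congr 1
    · exact Finset.sum_congr (Finset.filter_congr (fun p _ => by omega)) (fun _ _ => rfl)
    · exact Finset.sum_congr (Finset.filter_congr (fun p _ => by omega)) (fun _ _ => rfl)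
  have heq : ∑ p ∈ (Qd n).filter (fun p => p.1.2 = p.2.2), f p.1.1 p.1.2 p.2.1 p.2.2
      = ∑ d ∈ n.divisorsAntidiagonal, ∑ a ∈ Finset.Ico 1 d.1, f a d.2 (d.1 - a) d.2 := by
    have hsig := Finset.sum_sigma (n.divisorsAntidiagonal) (fun d => Finset.Ico 1 d.1)
      (fun q => f q.2 q.1.2 (q.1.1 - q.2) q.1.2)
    rw [← hsig]
    refine Finset.sum_nbij' (fun p => ⟨(p.1.1 + p.2.1, p.1.2), p.1.1⟩)
      (fun q => ((q.2, q.1.2), (q.1.1 - q.2, q.1.2))) ?_ ?_ ?_ ?_ ?_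
    · rintro ⟨⟨a, x⟩, b, y⟩ hp
      simp only [Finset.mem_filter, mem_Qd'] at hp
      obtain ⟨⟨ha, hx, hb, hy, h⟩, hxy⟩ := hp
      simp only [Finset.mem_sigma, Nat.mem_divisorsAntidiagonal, Finset.mem_Ico]
      refine ⟨⟨?_, by have h1 := Nat.mul_pos ha hx; omega⟩, by omega, by omega⟩
      subst hxy
      rw [Nat.add_mul]
      omega
    · rintro ⟨⟨d, x⟩, a⟩ hq
      simp only [Finset.mem_sigma, Nat.mem_divisorsAntidiagonal, Finset.mem_Ico] at hq
      obtain ⟨⟨hdx, hn⟩, ha1, had⟩ := hq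
      simp only [Finset.mem_filter, mem_Qd']
      have hx : 0 < x := by
        rcases Nat.eq_zero_or_pos x with h | h
        · subst h; simp at hdx; omega
        · exact h
      refine ⟨⟨by omega, hx, by omega, hx, ?_⟩, trivial⟩
      rw [← Nat.add_mul]
      have : a + (d - a) = d := by omega
      rw [this, hdx]
    · rintro ⟨⟨a, x⟩, b, y⟩ hp
      simp only [Finset.mem_filter, mem_Qd'] at hp
      obtain ⟨⟨ha, hx, hb, hy, h⟩, hxy⟩ := hp
      have h2 : a + b - a = b := by omega
      simp only [h2, hxy]
    · rintro ⟨⟨d, x⟩, a⟩ hq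
      simp only [Finset.mem_sigma, Nat.mem_divisorsAntidiagonal, Finset.mem_Ico] at hq
      obtain ⟨⟨hdx, hn⟩, ha1, had⟩ := hq
      have h2 : a + (d - a) = d := by omega
      simp only [h2]
    · rintro ⟨⟨a, x⟩, b, y⟩ hp
      simp only [Finset.mem_filter, mem_Qd'] at hp
      obtain ⟨⟨ha, hx, hb, hy, h⟩, hxy⟩ := hp
      have h2 : a + b - a = b := by omega
      simp only [h2, hxy]
  have hgt : ∑ p ∈ (Qd n).filter (fun p => p.2.2 < p.1.2), f p.1.1 p.1.2 p.2.1 p.2.2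
      = ∑ p ∈ (Qd n).filter (fun p => p.1.1 < p.2.1),
          f p.1.1 (p.1.2 + p.2.2) (p.2.1 - p.1.1) p.2.2 := by
    refine Finset.sum_nbij' (fun p => ((p.1.1, p.1.2 - p.2.2), (p.1.1 + p.2.1, p.2.2)))
      (fun p => ((p.1.1, p.1.2 + p.2.2), (p.2.1 - p.1.1, p.2.2))) ?_ ?_ ?_ ?_ ?_
    · rintro ⟨⟨a, x⟩, b, y⟩ hp
      simp only [Finset.mem_filter, mem_Qd'] at hp
      obtain ⟨⟨ha, hx, hb, hy, h⟩, hyx⟩ := hp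
      simp only [Finset.mem_filter, mem_Qd']
      refine ⟨⟨ha, by omega, by omega, hy, ?_⟩, by omega⟩
      zify [Nat.le_of_lt hyx] at h ⊢
      linear_combination h
    · rintro ⟨⟨u, v⟩, s, t⟩ hq
      simp only [Finset.mem_filter, mem_Qd'] at hq
      obtain ⟨⟨hu, hv, hs, ht, h⟩, hus⟩ := hq
      simp only [Finset.mem_filter, mem_Qd']
      refine ⟨⟨hu, by omega, by omega, ht, ?_⟩, by omega⟩
      zify [Nat.le_of_lt hus] at h ⊢
      linear_combination h
    · rintro ⟨⟨a, x⟩, b, y⟩ hp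
      simp only [Finset.mem_filter, mem_Qd'] at hp
      obtain ⟨⟨ha, hx, hb, hy, h⟩, hyx⟩ := hp
      have h1 : x - y + y = x := by omega
      have h2 : a + b - a = b := by omega
      simp only [h1, h2]
    · rintro ⟨⟨u, v⟩, s, t⟩ hq
      simp only [Finset.mem_filter, mem_Qd'] at hq
      obtain ⟨⟨hu, hv, hs, ht, h⟩, hus⟩ := hq
      have h1 : v + t - t = v := by omega
      have h2 : u + (s - u) = s := by omega
      simp only [h1, h2]
    · rintro ⟨⟨a, x⟩, b, y⟩ hp
      simp only [Finset.mem_filter, mem_Qd'] at hp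
      obtain ⟨⟨ha, hx, hb, hy, h⟩, hyx⟩ := hp
      have h1 : x - y + y = x := by omega
      have h2 : a + b - a = b := by omega
      simp only [h1, h2]
  have hlt : ∑ p ∈ (Qd n).filter (fun p => p.1.2 < p.2.2), f p.1.1 p.1.2 p.2.1 p.2.2
      = ∑ p ∈ (Qd n).filter (fun p => p.1.1 < p.2.1),
          f (p.2.1 - p.1.1) p.2.2 p.1.1 (p.1.2 + p.2.2) := by
    refine Finset.sum_nbij' (fun p => ((p.2.1, p.2.2 - p.1.2), (p.1.1 + p.2.1, p.1.2)))
      (fun p => ((p.2.1 - p.1.1, p.2.2), (p.1.1, p.1.2 + p.2.2))) ?_ ?_ ?_ ?_ ?_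
    · rintro ⟨⟨a, x⟩, b, y⟩ hp
      simp only [Finset.mem_filter, mem_Qd'] at hp
      obtain ⟨⟨ha, hx, hb, hy, h⟩, hxy⟩ := hp
      simp only [Finset.mem_filter, mem_Qd']
      refine ⟨⟨hb, by omega, by omega, hx, ?_⟩, by omega⟩
      zify [Nat.le_of_lt hxy] at h ⊢
      linear_combination h
    · rintro ⟨⟨u, v⟩, s, t⟩ hq
      simp only [Finset.mem_filter, mem_Qd'] at hq
      obtain ⟨⟨hu, hv, hs, ht, h⟩, hus⟩ := hq
      simp only [Finset.mem_filter, mem_Qd']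
      refine ⟨⟨by omega, ht, hu, by omega, ?_⟩, by omega⟩
      zify [Nat.le_of_lt hus] at h ⊢
      linear_combination h
    · rintro ⟨⟨a, x⟩, b, y⟩ hp
      simp only [Finset.mem_filter, mem_Qd'] at hp
      obtain ⟨⟨ha, hx, hb, hy, h⟩, hxy⟩ := hp
      have h1 : a + b - b = a := by omega
      have h2 : y - x + x = y := by omega
      simp only [h1, h2]
    · rintro ⟨⟨u, v⟩, s, t⟩ hq
      simp only [Finset.mem_filter, mem_Qd'] at hq
      obtain ⟨⟨hu, hv, hs, ht, h⟩, hus⟩ := hq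
      have h1 : s - u + u = s := by omega
      have h2 : v + t - t = v := by omega
      simp only [h1, h2]
    · rintro ⟨⟨a, x⟩, b, y⟩ hp
      simp only [Finset.mem_filter, mem_Qd'] at hp
      obtain ⟨⟨ha, hx, hb, hy, h⟩, hxy⟩ := hp
      have h1 : a + b - b = a := by omega
      have h2 : y - x + x = y := by omega
      simp only [h1, h2]
  rw [hsplit, heq, hgt, hlt, ← Finset.sum_add_distrib]

lemma pw0 (m : ℕ) (hm : 1 ≤ m) :
    ∑ a ∈ Finset.Ico 1 m, (a : ℂ)^0 = (-1 : ℂ) * (m : ℂ)^0 + (1 : ℂ) * (m : ℂ)^1 := by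
  induction m, hm using Nat.le_induction with
  | base => norm_num
  | succ m hm ih =>
      rw [Finset.sum_Ico_succ_top (by omega), ih]
      push_cast
      ring

lemma pw1 (m : ℕ) (hm : 1 ≤ m) :
    ∑ a ∈ Finset.Ico 1 m, (a : ℂ)^1 = ((-1 : ℂ)/2) * (m : ℂ)^1 + ((1 : ℂ)/2) * (m : ℂ)^2 := by
  induction m, hm using Nat.le_induction with
  | base => norm_num
  | succ m hm ih =>
      rw [Finset.sum_Ico_succ_top (by omega), ih]
      push_cast
      ring

lemma pw2 (m : ℕ) (hm : 1 ≤ m) :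
    ∑ a ∈ Finset.Ico 1 m, (a : ℂ)^2 = ((1 : ℂ)/6) * (m : ℂ)^1 + ((-1 : ℂ)/2) * (m : ℂ)^2 + ((1 : ℂ)/3) * (m : ℂ)^3 := by
  induction m, hm using Nat.le_induction with
  | base => norm_num
  | succ m hm ih =>
      rw [Finset.sum_Ico_succ_top (by omega), ih]
      push_cast
      ring

lemma pw3 (m : ℕ) (hm : 1 ≤ m) :
    ∑ a ∈ Finset.Ico 1 m, (a : ℂ)^3 = ((1 : ℂ)/4) * (m : ℂ)^2 + ((-1 : ℂ)/2) * (m : ℂ)^3 + ((1 : ℂ)/4) * (m : ℂ)^4 := by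
  induction m, hm using Nat.le_induction with
  | base => norm_num
  | succ m hm ih =>
      rw [Finset.sum_Ico_succ_top (by omega), ih]
      push_cast
      ring

lemma pw4 (m : ℕ) (hm : 1 ≤ m) :
    ∑ a ∈ Finset.Ico 1 m, (a : ℂ)^4 = ((-1 : ℂ)/30) * (m : ℂ)^1 + ((1 : ℂ)/3) * (m : ℂ)^3 + ((-1 : ℂ)/2) * (m : ℂ)^4 + ((1 : ℂ)/5) * (m : ℂ)^5 := by
  induction m, hm using Nat.le_induction with
  | base => norm_num
  | succ m hm ih =>
      rw [Finset.sum_Ico_succ_top (by omega), ih]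
      push_cast
      ring

lemma pw5 (m : ℕ) (hm : 1 ≤ m) :
    ∑ a ∈ Finset.Ico 1 m, (a : ℂ)^5 = ((-1 : ℂ)/12) * (m : ℂ)^2 + ((5 : ℂ)/12) * (m : ℂ)^4 + ((-1 : ℂ)/2) * (m : ℂ)^5 + ((1 : ℂ)/6) * (m : ℂ)^6 := by
  induction m, hm using Nat.le_induction with
  | base => norm_num
  | succ m hm ih =>
      rw [Finset.sum_Ico_succ_top (by omega), ih]
      push_cast
      ring

lemma pw6 (m : ℕ) (hm : 1 ≤ m) :
    ∑ a ∈ Finset.Ico 1 m, (a : ℂ)^6 = ((1 : ℂ)/42) * (m : ℂ)^1 + ((-1 : ℂ)/6) * (m : ℂ)^3 + ((1 : ℂ)/2) * (m : ℂ)^5 + ((-1 : ℂ)/2) * (m : ℂ)^6 + ((1 : ℂ)/7) * (m : ℂ)^7 := by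
  induction m, hm using Nat.le_induction with
  | base => norm_num
  | succ m hm ih =>
      rw [Finset.sum_Ico_succ_top (by omega), ih]
      push_cast
      ring


/-- sums over pairs with smaller first base -/
def tm (p q n : ℕ) : ℂ :=
  ∑ r ∈ (Qd n).filter (fun r => r.1.1 < r.2.1), (r.1.1 : ℂ)^p * (r.2.1 : ℂ)^q

/-- the diagonal-part sum -/
def Gc (j k n : ℕ) : ℂ :=
  ∑ d ∈ n.divisorsAntidiagonal, ∑ a ∈ Finset.Ico 1 d.1, (a : ℂ)^j * ((↑(d.1 - a) : ℂ))^k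


lemma Gc11 (n : ℕ) : Gc 1 1 n = ((-1 : ℂ)/6) * sg 1 n + ((1 : ℂ)/6) * sg 3 n := by
  have h1 : ∀ d ∈ n.divisorsAntidiagonal,
      (∑ a ∈ Finset.Ico 1 d.1, (a : ℂ)^1 * ((↑(d.1 - a) : ℂ))^1)
        = ((-1 : ℂ)/6) * (d.1 : ℂ)^1 + ((1 : ℂ)/6) * (d.1 : ℂ)^3 := by
    intro d hd
    have hd1 : 1 ≤ d.1 := Nat.pos_of_ne_zero (Nat.left_ne_zero_of_mem_divisorsAntidiagonal hd)
    have h2 : ∀ a ∈ Finset.Ico 1 d.1, (a : ℂ)^1 * ((↑(d.1 - a) : ℂ))^1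
        = ((1 : ℂ) * (d.1 : ℂ)^1) * (a : ℂ)^1 + ((-1 : ℂ) * (d.1 : ℂ)^0) * (a : ℂ)^2 := by
      intro a ha
      rw [Finset.mem_Ico] at ha
      rw [Nat.cast_sub (by omega)]
      ring
    rw [Finset.sum_congr rfl h2]
    simp only [Finset.sum_add_distrib, ← Finset.mul_sum]
    rw [pw1 _ hd1, pw2 _ hd1]
    ring
  rw [Gc, Finset.sum_congr rfl h1]
  simp only [Finset.sum_add_distrib, ← Finset.mul_sum, ← sg_eq_sum_DA]

lemma Gc02 (n : ℕ) : Gc 0 2 n = ((1 : ℂ)/6) * sg 1 n + ((-1 : ℂ)/2) * sg 2 n + ((1 : ℂ)/3) * sg 3 n := by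
  have h1 : ∀ d ∈ n.divisorsAntidiagonal,
      (∑ a ∈ Finset.Ico 1 d.1, (a : ℂ)^0 * ((↑(d.1 - a) : ℂ))^2)
        = ((1 : ℂ)/6) * (d.1 : ℂ)^1 + ((-1 : ℂ)/2) * (d.1 : ℂ)^2 + ((1 : ℂ)/3) * (d.1 : ℂ)^3 := by
    intro d hd
    have hd1 : 1 ≤ d.1 := Nat.pos_of_ne_zero (Nat.left_ne_zero_of_mem_divisorsAntidiagonal hd)
    have h2 : ∀ a ∈ Finset.Ico 1 d.1, (a : ℂ)^0 * ((↑(d.1 - a) : ℂ))^2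
        = ((1 : ℂ) * (d.1 : ℂ)^2) * (a : ℂ)^0 + ((-2 : ℂ) * (d.1 : ℂ)^1) * (a : ℂ)^1 + ((1 : ℂ) * (d.1 : ℂ)^0) * (a : ℂ)^2 := by
      intro a ha
      rw [Finset.mem_Ico] at ha
      rw [Nat.cast_sub (by omega)]
      ring
    rw [Finset.sum_congr rfl h2]
    simp only [Finset.sum_add_distrib, ← Finset.mul_sum]
    rw [pw0 _ hd1, pw1 _ hd1, pw2 _ hd1]
    ring
  rw [Gc, Finset.sum_congr rfl h1]
  simp only [Finset.sum_add_distrib, ← Finset.mul_sum, ← sg_eq_sum_DA]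

lemma Gc13 (n : ℕ) : Gc 1 3 n = ((1 : ℂ)/30) * sg 1 n + ((-1 : ℂ)/12) * sg 3 n + ((1 : ℂ)/20) * sg 5 n := by
  have h1 : ∀ d ∈ n.divisorsAntidiagonal,
      (∑ a ∈ Finset.Ico 1 d.1, (a : ℂ)^1 * ((↑(d.1 - a) : ℂ))^3)
        = ((1 : ℂ)/30) * (d.1 : ℂ)^1 + ((-1 : ℂ)/12) * (d.1 : ℂ)^3 + ((1 : ℂ)/20) * (d.1 : ℂ)^5 := by
    intro d hd
    have hd1 : 1 ≤ d.1 := Nat.pos_of_ne_zero (Nat.left_ne_zero_of_mem_divisorsAntidiagonal hd)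
    have h2 : ∀ a ∈ Finset.Ico 1 d.1, (a : ℂ)^1 * ((↑(d.1 - a) : ℂ))^3
        = ((1 : ℂ) * (d.1 : ℂ)^3) * (a : ℂ)^1 + ((-3 : ℂ) * (d.1 : ℂ)^2) * (a : ℂ)^2 + ((3 : ℂ) * (d.1 : ℂ)^1) * (a : ℂ)^3 + ((-1 : ℂ) * (d.1 : ℂ)^0) * (a : ℂ)^4 := by
      intro a ha
      rw [Finset.mem_Ico] at ha
      rw [Nat.cast_sub (by omega)]
      ring
    rw [Finset.sum_congr rfl h2]
    simp only [Finset.sum_add_distrib, ← Finset.mul_sum]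
    rw [pw1 _ hd1, pw2 _ hd1, pw3 _ hd1, pw4 _ hd1]
    ring
  rw [Gc, Finset.sum_congr rfl h1]
  simp only [Finset.sum_add_distrib, ← Finset.mul_sum, ← sg_eq_sum_DA]

lemma Gc22 (n : ℕ) : Gc 2 2 n = ((-1 : ℂ)/30) * sg 1 n + ((1 : ℂ)/30) * sg 5 n := by
  have h1 : ∀ d ∈ n.divisorsAntidiagonal,
      (∑ a ∈ Finset.Ico 1 d.1, (a : ℂ)^2 * ((↑(d.1 - a) : ℂ))^2)
        = ((-1 : ℂ)/30) * (d.1 : ℂ)^1 + ((1 : ℂ)/30) * (d.1 : ℂ)^5 := by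
    intro d hd
    have hd1 : 1 ≤ d.1 := Nat.pos_of_ne_zero (Nat.left_ne_zero_of_mem_divisorsAntidiagonal hd)
    have h2 : ∀ a ∈ Finset.Ico 1 d.1, (a : ℂ)^2 * ((↑(d.1 - a) : ℂ))^2
        = ((1 : ℂ) * (d.1 : ℂ)^2) * (a : ℂ)^2 + ((-2 : ℂ) * (d.1 : ℂ)^1) * (a : ℂ)^3 + ((1 : ℂ) * (d.1 : ℂ)^0) * (a : ℂ)^4 := by
      intro a ha
      rw [Finset.mem_Ico] at ha
      rw [Nat.cast_sub (by omega)]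
      ring
    rw [Finset.sum_congr rfl h2]
    simp only [Finset.sum_add_distrib, ← Finset.mul_sum]
    rw [pw2 _ hd1, pw3 _ hd1, pw4 _ hd1]
    ring
  rw [Gc, Finset.sum_congr rfl h1]
  simp only [Finset.sum_add_distrib, ← Finset.mul_sum, ← sg_eq_sum_DA]

lemma Gc04 (n : ℕ) : Gc 0 4 n = ((-1 : ℂ)/30) * sg 1 n + ((1 : ℂ)/3) * sg 3 n + ((-1 : ℂ)/2) * sg 4 n + ((1 : ℂ)/5) * sg 5 n := by
  have h1 : ∀ d ∈ n.divisorsAntidiagonal,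
      (∑ a ∈ Finset.Ico 1 d.1, (a : ℂ)^0 * ((↑(d.1 - a) : ℂ))^4)
        = ((-1 : ℂ)/30) * (d.1 : ℂ)^1 + ((1 : ℂ)/3) * (d.1 : ℂ)^3 + ((-1 : ℂ)/2) * (d.1 : ℂ)^4 + ((1 : ℂ)/5) * (d.1 : ℂ)^5 := by
    intro d hd
    have hd1 : 1 ≤ d.1 := Nat.pos_of_ne_zero (Nat.left_ne_zero_of_mem_divisorsAntidiagonal hd)
    have h2 : ∀ a ∈ Finset.Ico 1 d.1, (a : ℂ)^0 * ((↑(d.1 - a) : ℂ))^4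
        = ((1 : ℂ) * (d.1 : ℂ)^4) * (a : ℂ)^0 + ((-4 : ℂ) * (d.1 : ℂ)^3) * (a : ℂ)^1 + ((6 : ℂ) * (d.1 : ℂ)^2) * (a : ℂ)^2 + ((-4 : ℂ) * (d.1 : ℂ)^1) * (a : ℂ)^3 + ((1 : ℂ) * (d.1 : ℂ)^0) * (a : ℂ)^4 := by
      intro a ha
      rw [Finset.mem_Ico] at ha
      rw [Nat.cast_sub (by omega)]
      ring
    rw [Finset.sum_congr rfl h2]
    simp only [Finset.sum_add_distrib, ← Finset.mul_sum]
    rw [pw0 _ hd1, pw1 _ hd1, pw2 _ hd1, pw3 _ hd1, pw4 _ hd1]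
    ring
  rw [Gc, Finset.sum_congr rfl h1]
  simp only [Finset.sum_add_distrib, ← Finset.mul_sum, ← sg_eq_sum_DA]

lemma Gc33 (n : ℕ) : Gc 3 3 n = ((-1 : ℂ)/42) * sg 1 n + ((1 : ℂ)/60) * sg 3 n + ((1 : ℂ)/140) * sg 7 n := by
  have h1 : ∀ d ∈ n.divisorsAntidiagonal,
      (∑ a ∈ Finset.Ico 1 d.1, (a : ℂ)^3 * ((↑(d.1 - a) : ℂ))^3)
        = ((-1 : ℂ)/42) * (d.1 : ℂ)^1 + ((1 : ℂ)/60) * (d.1 : ℂ)^3 + ((1 : ℂ)/140) * (d.1 : ℂ)^7 := by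
    intro d hd
    have hd1 : 1 ≤ d.1 := Nat.pos_of_ne_zero (Nat.left_ne_zero_of_mem_divisorsAntidiagonal hd)
    have h2 : ∀ a ∈ Finset.Ico 1 d.1, (a : ℂ)^3 * ((↑(d.1 - a) : ℂ))^3
        = ((1 : ℂ) * (d.1 : ℂ)^3) * (a : ℂ)^3 + ((-3 : ℂ) * (d.1 : ℂ)^2) * (a : ℂ)^4 + ((3 : ℂ) * (d.1 : ℂ)^1) * (a : ℂ)^5 + ((-1 : ℂ) * (d.1 : ℂ)^0) * (a : ℂ)^6 := by
      intro a ha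
      rw [Finset.mem_Ico] at ha
      rw [Nat.cast_sub (by omega)]
      ring
    rw [Finset.sum_congr rfl h2]
    simp only [Finset.sum_add_distrib, ← Finset.mul_sum]
    rw [pw3 _ hd1, pw4 _ hd1, pw5 _ hd1, pw6 _ hd1]
    ring
  rw [Gc, Finset.sum_congr rfl h1]
  simp only [Finset.sum_add_distrib, ← Finset.mul_sum, ← sg_eq_sum_DA]

lemma Gc24 (n : ℕ) : Gc 2 4 n = ((1 : ℂ)/42) * sg 1 n + ((-1 : ℂ)/30) * sg 3 n + ((1 : ℂ)/105) * sg 7 n := by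
  have h1 : ∀ d ∈ n.divisorsAntidiagonal,
      (∑ a ∈ Finset.Ico 1 d.1, (a : ℂ)^2 * ((↑(d.1 - a) : ℂ))^4)
        = ((1 : ℂ)/42) * (d.1 : ℂ)^1 + ((-1 : ℂ)/30) * (d.1 : ℂ)^3 + ((1 : ℂ)/105) * (d.1 : ℂ)^7 := by
    intro d hd
    have hd1 : 1 ≤ d.1 := Nat.pos_of_ne_zero (Nat.left_ne_zero_of_mem_divisorsAntidiagonal hd)
    have h2 : ∀ a ∈ Finset.Ico 1 d.1, (a : ℂ)^2 * ((↑(d.1 - a) : ℂ))^4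
        = ((1 : ℂ) * (d.1 : ℂ)^4) * (a : ℂ)^2 + ((-4 : ℂ) * (d.1 : ℂ)^3) * (a : ℂ)^3 + ((6 : ℂ) * (d.1 : ℂ)^2) * (a : ℂ)^4 + ((-4 : ℂ) * (d.1 : ℂ)^1) * (a : ℂ)^5 + ((1 : ℂ) * (d.1 : ℂ)^0) * (a : ℂ)^6 := by
      intro a ha
      rw [Finset.mem_Ico] at ha
      rw [Nat.cast_sub (by omega)]
      ring
    rw [Finset.sum_congr rfl h2]
    simp only [Finset.sum_add_distrib, ← Finset.mul_sum]
    rw [pw2 _ hd1, pw3 _ hd1, pw4 _ hd1, pw5 _ hd1, pw6 _ hd1]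
    ring
  rw [Gc, Finset.sum_congr rfl h1]
  simp only [Finset.sum_add_distrib, ← Finset.mul_sum, ← sg_eq_sum_DA]

lemma Gc15 (n : ℕ) : Gc 1 5 n = ((-1 : ℂ)/42) * sg 1 n + ((1 : ℂ)/12) * sg 3 n + ((-1 : ℂ)/12) * sg 5 n + ((1 : ℂ)/42) * sg 7 n := by
  have h1 : ∀ d ∈ n.divisorsAntidiagonal,
      (∑ a ∈ Finset.Ico 1 d.1, (a : ℂ)^1 * ((↑(d.1 - a) : ℂ))^5)
        = ((-1 : ℂ)/42) * (d.1 : ℂ)^1 + ((1 : ℂ)/12) * (d.1 : ℂ)^3 + ((-1 : ℂ)/12) * (d.1 : ℂ)^5 + ((1 : ℂ)/42) * (d.1 : ℂ)^7 := by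
    intro d hd
    have hd1 : 1 ≤ d.1 := Nat.pos_of_ne_zero (Nat.left_ne_zero_of_mem_divisorsAntidiagonal hd)
    have h2 : ∀ a ∈ Finset.Ico 1 d.1, (a : ℂ)^1 * ((↑(d.1 - a) : ℂ))^5
        = ((1 : ℂ) * (d.1 : ℂ)^5) * (a : ℂ)^1 + ((-5 : ℂ) * (d.1 : ℂ)^4) * (a : ℂ)^2 + ((10 : ℂ) * (d.1 : ℂ)^3) * (a : ℂ)^3 + ((-10 : ℂ) * (d.1 : ℂ)^2) * (a : ℂ)^4 + ((5 : ℂ) * (d.1 : ℂ)^1) * (a : ℂ)^5 + ((-1 : ℂ) * (d.1 : ℂ)^0) * (a : ℂ)^6 := by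
      intro a ha
      rw [Finset.mem_Ico] at ha
      rw [Nat.cast_sub (by omega)]
      ring
    rw [Finset.sum_congr rfl h2]
    simp only [Finset.sum_add_distrib, ← Finset.mul_sum]
    rw [pw1 _ hd1, pw2 _ hd1, pw3 _ hd1, pw4 _ hd1, pw5 _ hd1, pw6 _ hd1]
    ring
  rw [Gc, Finset.sum_congr rfl h1]
  simp only [Finset.sum_add_distrib, ← Finset.mul_sum, ← sg_eq_sum_DA]

lemma Gc06 (n : ℕ) : Gc 0 6 n = ((1 : ℂ)/42) * sg 1 n + ((-1 : ℂ)/6) * sg 3 n + ((1 : ℂ)/2) * sg 5 n + ((-1 : ℂ)/2) * sg 6 n + ((1 : ℂ)/7) * sg 7 n := by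
  have h1 : ∀ d ∈ n.divisorsAntidiagonal,
      (∑ a ∈ Finset.Ico 1 d.1, (a : ℂ)^0 * ((↑(d.1 - a) : ℂ))^6)
        = ((1 : ℂ)/42) * (d.1 : ℂ)^1 + ((-1 : ℂ)/6) * (d.1 : ℂ)^3 + ((1 : ℂ)/2) * (d.1 : ℂ)^5 + ((-1 : ℂ)/2) * (d.1 : ℂ)^6 + ((1 : ℂ)/7) * (d.1 : ℂ)^7 := by
    intro d hd
    have hd1 : 1 ≤ d.1 := Nat.pos_of_ne_zero (Nat.left_ne_zero_of_mem_divisorsAntidiagonal hd)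
    have h2 : ∀ a ∈ Finset.Ico 1 d.1, (a : ℂ)^0 * ((↑(d.1 - a) : ℂ))^6
        = ((1 : ℂ) * (d.1 : ℂ)^6) * (a : ℂ)^0 + ((-6 : ℂ) * (d.1 : ℂ)^5) * (a : ℂ)^1 + ((15 : ℂ) * (d.1 : ℂ)^4) * (a : ℂ)^2 + ((-20 : ℂ) * (d.1 : ℂ)^3) * (a : ℂ)^3 + ((15 : ℂ) * (d.1 : ℂ)^2) * (a : ℂ)^4 + ((-6 : ℂ) * (d.1 : ℂ)^1) * (a : ℂ)^5 + ((1 : ℂ) * (d.1 : ℂ)^0) * (a : ℂ)^6 := by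
      intro a ha
      rw [Finset.mem_Ico] at ha
      rw [Nat.cast_sub (by omega)]
      ring
    rw [Finset.sum_congr rfl h2]
    simp only [Finset.sum_add_distrib, ← Finset.mul_sum]
    rw [pw0 _ hd1, pw1 _ hd1, pw2 _ hd1, pw3 _ hd1, pw4 _ hd1, pw5 _ hd1, pw6 _ hd1]
    ring
  rw [Gc, Finset.sum_congr rfl h1]
  simp only [Finset.sum_add_distrib, ← Finset.mul_sum, ← sg_eq_sum_DA]

lemma X11 (n : ℕ) :
    ∑ r ∈ (Qd n).filter (fun r => r.1.1 < r.2.1),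
      ((r.1.1 : ℂ)^1 * ((↑(r.2.1 - r.1.1) : ℂ))^1
        + ((↑(r.2.1 - r.1.1) : ℂ))^1 * (r.1.1 : ℂ)^1)
      = (2 : ℂ) * tm 1 1 n + (-2 : ℂ) * tm 2 0 n := by
  have h1 : ∀ r ∈ (Qd n).filter (fun r => r.1.1 < r.2.1),
      ((r.1.1 : ℂ)^1 * ((↑(r.2.1 - r.1.1) : ℂ))^1
        + ((↑(r.2.1 - r.1.1) : ℂ))^1 * (r.1.1 : ℂ)^1)
      = (2 : ℂ) * ((r.1.1 : ℂ)^1 * (r.2.1 : ℂ)^1) + (-2 : ℂ) * ((r.1.1 : ℂ)^2 * (r.2.1 : ℂ)^0) := by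
    intro r hr
    simp only [Finset.mem_filter] at hr
    rw [Nat.cast_sub hr.2.le]
    ring
  rw [Finset.sum_congr rfl h1]
  simp only [Finset.sum_add_distrib, ← Finset.mul_sum]
  simp only [tm]

lemma X02 (n : ℕ) :
    ∑ r ∈ (Qd n).filter (fun r => r.1.1 < r.2.1),
      ((r.1.1 : ℂ)^0 * ((↑(r.2.1 - r.1.1) : ℂ))^2
        + ((↑(r.2.1 - r.1.1) : ℂ))^0 * (r.1.1 : ℂ)^2)
      = (1 : ℂ) * tm 0 2 n + (-2 : ℂ) * tm 1 1 n + (2 : ℂ) * tm 2 0 n := by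
  have h1 : ∀ r ∈ (Qd n).filter (fun r => r.1.1 < r.2.1),
      ((r.1.1 : ℂ)^0 * ((↑(r.2.1 - r.1.1) : ℂ))^2
        + ((↑(r.2.1 - r.1.1) : ℂ))^0 * (r.1.1 : ℂ)^2)
      = (1 : ℂ) * ((r.1.1 : ℂ)^0 * (r.2.1 : ℂ)^2) + (-2 : ℂ) * ((r.1.1 : ℂ)^1 * (r.2.1 : ℂ)^1) + (2 : ℂ) * ((r.1.1 : ℂ)^2 * (r.2.1 : ℂ)^0) := by
    intro r hr
    simp only [Finset.mem_filter] at hr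
    rw [Nat.cast_sub hr.2.le]
    ring
  rw [Finset.sum_congr rfl h1]
  simp only [Finset.sum_add_distrib, ← Finset.mul_sum]
  simp only [tm]

lemma X13 (n : ℕ) :
    ∑ r ∈ (Qd n).filter (fun r => r.1.1 < r.2.1),
      ((r.1.1 : ℂ)^1 * ((↑(r.2.1 - r.1.1) : ℂ))^3
        + ((↑(r.2.1 - r.1.1) : ℂ))^1 * (r.1.1 : ℂ)^3)
      = (1 : ℂ) * tm 1 3 n + (-3 : ℂ) * tm 2 2 n + (4 : ℂ) * tm 3 1 n + (-2 : ℂ) * tm 4 0 n := by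
  have h1 : ∀ r ∈ (Qd n).filter (fun r => r.1.1 < r.2.1),
      ((r.1.1 : ℂ)^1 * ((↑(r.2.1 - r.1.1) : ℂ))^3
        + ((↑(r.2.1 - r.1.1) : ℂ))^1 * (r.1.1 : ℂ)^3)
      = (1 : ℂ) * ((r.1.1 : ℂ)^1 * (r.2.1 : ℂ)^3) + (-3 : ℂ) * ((r.1.1 : ℂ)^2 * (r.2.1 : ℂ)^2) + (4 : ℂ) * ((r.1.1 : ℂ)^3 * (r.2.1 : ℂ)^1) + (-2 : ℂ) * ((r.1.1 : ℂ)^4 * (r.2.1 : ℂ)^0) := by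
    intro r hr
    simp only [Finset.mem_filter] at hr
    rw [Nat.cast_sub hr.2.le]
    ring
  rw [Finset.sum_congr rfl h1]
  simp only [Finset.sum_add_distrib, ← Finset.mul_sum]
  simp only [tm]

lemma X22 (n : ℕ) :
    ∑ r ∈ (Qd n).filter (fun r => r.1.1 < r.2.1),
      ((r.1.1 : ℂ)^2 * ((↑(r.2.1 - r.1.1) : ℂ))^2
        + ((↑(r.2.1 - r.1.1) : ℂ))^2 * (r.1.1 : ℂ)^2)
      = (2 : ℂ) * tm 2 2 n + (-4 : ℂ) * tm 3 1 n + (2 : ℂ) * tm 4 0 n := by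
  have h1 : ∀ r ∈ (Qd n).filter (fun r => r.1.1 < r.2.1),
      ((r.1.1 : ℂ)^2 * ((↑(r.2.1 - r.1.1) : ℂ))^2
        + ((↑(r.2.1 - r.1.1) : ℂ))^2 * (r.1.1 : ℂ)^2)
      = (2 : ℂ) * ((r.1.1 : ℂ)^2 * (r.2.1 : ℂ)^2) + (-4 : ℂ) * ((r.1.1 : ℂ)^3 * (r.2.1 : ℂ)^1) + (2 : ℂ) * ((r.1.1 : ℂ)^4 * (r.2.1 : ℂ)^0) := by
    intro r hr
    simp only [Finset.mem_filter] at hr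
    rw [Nat.cast_sub hr.2.le]
    ring
  rw [Finset.sum_congr rfl h1]
  simp only [Finset.sum_add_distrib, ← Finset.mul_sum]
  simp only [tm]

lemma X04 (n : ℕ) :
    ∑ r ∈ (Qd n).filter (fun r => r.1.1 < r.2.1),
      ((r.1.1 : ℂ)^0 * ((↑(r.2.1 - r.1.1) : ℂ))^4
        + ((↑(r.2.1 - r.1.1) : ℂ))^0 * (r.1.1 : ℂ)^4)
      = (1 : ℂ) * tm 0 4 n + (-4 : ℂ) * tm 1 3 n + (6 : ℂ) * tm 2 2 n + (-4 : ℂ) * tm 3 1 n + (2 : ℂ) * tm 4 0 n := by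
  have h1 : ∀ r ∈ (Qd n).filter (fun r => r.1.1 < r.2.1),
      ((r.1.1 : ℂ)^0 * ((↑(r.2.1 - r.1.1) : ℂ))^4
        + ((↑(r.2.1 - r.1.1) : ℂ))^0 * (r.1.1 : ℂ)^4)
      = (1 : ℂ) * ((r.1.1 : ℂ)^0 * (r.2.1 : ℂ)^4) + (-4 : ℂ) * ((r.1.1 : ℂ)^1 * (r.2.1 : ℂ)^3) + (6 : ℂ) * ((r.1.1 : ℂ)^2 * (r.2.1 : ℂ)^2) + (-4 : ℂ) * ((r.1.1 : ℂ)^3 * (r.2.1 : ℂ)^1) + (2 : ℂ) * ((r.1.1 : ℂ)^4 * (r.2.1 : ℂ)^0) := by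
    intro r hr
    simp only [Finset.mem_filter] at hr
    rw [Nat.cast_sub hr.2.le]
    ring
  rw [Finset.sum_congr rfl h1]
  simp only [Finset.sum_add_distrib, ← Finset.mul_sum]
  simp only [tm]

lemma X33 (n : ℕ) :
    ∑ r ∈ (Qd n).filter (fun r => r.1.1 < r.2.1),
      ((r.1.1 : ℂ)^3 * ((↑(r.2.1 - r.1.1) : ℂ))^3
        + ((↑(r.2.1 - r.1.1) : ℂ))^3 * (r.1.1 : ℂ)^3)
      = (2 : ℂ) * tm 3 3 n + (-6 : ℂ) * tm 4 2 n + (6 : ℂ) * tm 5 1 n + (-2 : ℂ) * tm 6 0 n := by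
  have h1 : ∀ r ∈ (Qd n).filter (fun r => r.1.1 < r.2.1),
      ((r.1.1 : ℂ)^3 * ((↑(r.2.1 - r.1.1) : ℂ))^3
        + ((↑(r.2.1 - r.1.1) : ℂ))^3 * (r.1.1 : ℂ)^3)
      = (2 : ℂ) * ((r.1.1 : ℂ)^3 * (r.2.1 : ℂ)^3) + (-6 : ℂ) * ((r.1.1 : ℂ)^4 * (r.2.1 : ℂ)^2) + (6 : ℂ) * ((r.1.1 : ℂ)^5 * (r.2.1 : ℂ)^1) + (-2 : ℂ) * ((r.1.1 : ℂ)^6 * (r.2.1 : ℂ)^0) := by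
    intro r hr
    simp only [Finset.mem_filter] at hr
    rw [Nat.cast_sub hr.2.le]
    ring
  rw [Finset.sum_congr rfl h1]
  simp only [Finset.sum_add_distrib, ← Finset.mul_sum]
  simp only [tm]

lemma X24 (n : ℕ) :
    ∑ r ∈ (Qd n).filter (fun r => r.1.1 < r.2.1),
      ((r.1.1 : ℂ)^2 * ((↑(r.2.1 - r.1.1) : ℂ))^4
        + ((↑(r.2.1 - r.1.1) : ℂ))^2 * (r.1.1 : ℂ)^4)
      = (1 : ℂ) * tm 2 4 n + (-4 : ℂ) * tm 3 3 n + (7 : ℂ) * tm 4 2 n + (-6 : ℂ) * tm 5 1 n + (2 : ℂ) * tm 6 0 n := by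
  have h1 : ∀ r ∈ (Qd n).filter (fun r => r.1.1 < r.2.1),
      ((r.1.1 : ℂ)^2 * ((↑(r.2.1 - r.1.1) : ℂ))^4
        + ((↑(r.2.1 - r.1.1) : ℂ))^2 * (r.1.1 : ℂ)^4)
      = (1 : ℂ) * ((r.1.1 : ℂ)^2 * (r.2.1 : ℂ)^4) + (-4 : ℂ) * ((r.1.1 : ℂ)^3 * (r.2.1 : ℂ)^3) + (7 : ℂ) * ((r.1.1 : ℂ)^4 * (r.2.1 : ℂ)^2) + (-6 : ℂ) * ((r.1.1 : ℂ)^5 * (r.2.1 : ℂ)^1) + (2 : ℂ) * ((r.1.1 : ℂ)^6 * (r.2.1 : ℂ)^0) := by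
    intro r hr
    simp only [Finset.mem_filter] at hr
    rw [Nat.cast_sub hr.2.le]
    ring
  rw [Finset.sum_congr rfl h1]
  simp only [Finset.sum_add_distrib, ← Finset.mul_sum]
  simp only [tm]

lemma X15 (n : ℕ) :
    ∑ r ∈ (Qd n).filter (fun r => r.1.1 < r.2.1),
      ((r.1.1 : ℂ)^1 * ((↑(r.2.1 - r.1.1) : ℂ))^5
        + ((↑(r.2.1 - r.1.1) : ℂ))^1 * (r.1.1 : ℂ)^5)
      = (1 : ℂ) * tm 1 5 n + (-5 : ℂ) * tm 2 4 n + (10 : ℂ) * tm 3 3 n + (-10 : ℂ) * tm 4 2 n + (6 : ℂ) * tm 5 1 n + (-2 : ℂ) * tm 6 0 n := by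
  have h1 : ∀ r ∈ (Qd n).filter (fun r => r.1.1 < r.2.1),
      ((r.1.1 : ℂ)^1 * ((↑(r.2.1 - r.1.1) : ℂ))^5
        + ((↑(r.2.1 - r.1.1) : ℂ))^1 * (r.1.1 : ℂ)^5)
      = (1 : ℂ) * ((r.1.1 : ℂ)^1 * (r.2.1 : ℂ)^5) + (-5 : ℂ) * ((r.1.1 : ℂ)^2 * (r.2.1 : ℂ)^4) + (10 : ℂ) * ((r.1.1 : ℂ)^3 * (r.2.1 : ℂ)^3) + (-10 : ℂ) * ((r.1.1 : ℂ)^4 * (r.2.1 : ℂ)^2) + (6 : ℂ) * ((r.1.1 : ℂ)^5 * (r.2.1 : ℂ)^1) + (-2 : ℂ) * ((r.1.1 : ℂ)^6 * (r.2.1 : ℂ)^0) := by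
    intro r hr
    simp only [Finset.mem_filter] at hr
    rw [Nat.cast_sub hr.2.le]
    ring
  rw [Finset.sum_congr rfl h1]
  simp only [Finset.sum_add_distrib, ← Finset.mul_sum]
  simp only [tm]

lemma X06 (n : ℕ) :
    ∑ r ∈ (Qd n).filter (fun r => r.1.1 < r.2.1),
      ((r.1.1 : ℂ)^0 * ((↑(r.2.1 - r.1.1) : ℂ))^6
        + ((↑(r.2.1 - r.1.1) : ℂ))^0 * (r.1.1 : ℂ)^6)
      = (1 : ℂ) * tm 0 6 n + (-6 : ℂ) * tm 1 5 n + (15 : ℂ) * tm 2 4 n + (-20 : ℂ) * tm 3 3 n + (15 : ℂ) * tm 4 2 n + (-6 : ℂ) * tm 5 1 n + (2 : ℂ) * tm 6 0 n := by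
  have h1 : ∀ r ∈ (Qd n).filter (fun r => r.1.1 < r.2.1),
      ((r.1.1 : ℂ)^0 * ((↑(r.2.1 - r.1.1) : ℂ))^6
        + ((↑(r.2.1 - r.1.1) : ℂ))^0 * (r.1.1 : ℂ)^6)
      = (1 : ℂ) * ((r.1.1 : ℂ)^0 * (r.2.1 : ℂ)^6) + (-6 : ℂ) * ((r.1.1 : ℂ)^1 * (r.2.1 : ℂ)^5) + (15 : ℂ) * ((r.1.1 : ℂ)^2 * (r.2.1 : ℂ)^4) + (-20 : ℂ) * ((r.1.1 : ℂ)^3 * (r.2.1 : ℂ)^3) + (15 : ℂ) * ((r.1.1 : ℂ)^4 * (r.2.1 : ℂ)^2) + (-6 : ℂ) * ((r.1.1 : ℂ)^5 * (r.2.1 : ℂ)^1) + (2 : ℂ) * ((r.1.1 : ℂ)^6 * (r.2.1 : ℂ)^0) := by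
    intro r hr
    simp only [Finset.mem_filter] at hr
    rw [Nat.cast_sub hr.2.le]
    ring
  rw [Finset.sum_congr rfl h1]
  simp only [Finset.sum_add_distrib, ← Finset.mul_sum]
  simp only [tm]

lemma Mfull (j k n : ℕ) :
    Sc j k n = Gc j k n
      + ∑ r ∈ (Qd n).filter (fun r => r.1.1 < r.2.1),
          ((r.1.1 : ℂ)^j * ((↑(r.2.1 - r.1.1) : ℂ))^k
            + ((↑(r.2.1 - r.1.1) : ℂ))^j * (r.1.1 : ℂ)^k) := by
  exact master n (fun a _ b _ => (a : ℂ)^j * (b : ℂ)^k)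

lemma D_eq (j k n : ℕ) (hjk : 1 ≤ j + k) :
    Sc j k n = tm j k n + tm k j n + ((n : ℂ) * sg (j + k - 1) n - sg (j + k) n) := by
  classical
  have hsplit : Sc j k n
      = ∑ r ∈ (Qd n).filter (fun r => r.1.1 < r.2.1), (r.1.1:ℂ)^j * (r.2.1:ℂ)^k
        + (∑ r ∈ (Qd n).filter (fun r => r.2.1 < r.1.1), (r.1.1:ℂ)^j * (r.2.1:ℂ)^k
        + ∑ r ∈ (Qd n).filter (fun r => r.1.1 = r.2.1), (r.1.1:ℂ)^j * (r.2.1:ℂ)^k) := by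
    rw [Sc, ← Finset.sum_filter_add_sum_filter_not (Qd n) (fun r => r.1.1 < r.2.1)]
    congr 1
    rw [← Finset.sum_filter_add_sum_filter_not ((Qd n).filter (fun r => ¬r.1.1 < r.2.1))
      (fun r => r.2.1 < r.1.1), Finset.filter_filter, Finset.filter_filter]
    congr 1
    · exact Finset.sum_congr (Finset.filter_congr (fun r _ => by omega)) (fun _ _ => rfl)
    · exact Finset.sum_congr (Finset.filter_congr (fun r _ => by omega)) (fun _ _ => rfl)
  have hswap : ∑ r ∈ (Qd n).filter (fun r => r.2.1 < r.1.1), (r.1.1:ℂ)^j * (r.2.1:ℂ)^k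
      = tm k j n := by
    rw [tm]
    refine Finset.sum_nbij' (fun r => (r.2, r.1)) (fun r => (r.2, r.1)) ?_ ?_ ?_ ?_ ?_
    · rintro ⟨⟨a,x⟩,b,y⟩ hp
      simp only [Finset.mem_filter, mem_Qd'] at hp ⊢
      obtain ⟨⟨ha,hx,hb,hy,h⟩,hba⟩ := hp
      exact ⟨⟨hb,hy,ha,hx, by omega⟩, hba⟩
    · rintro ⟨⟨a,x⟩,b,y⟩ hp
      simp only [Finset.mem_filter, mem_Qd'] at hp ⊢
      obtain ⟨⟨ha,hx,hb,hy,h⟩,hab⟩ := hp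
      exact ⟨⟨hb,hy,ha,hx, by omega⟩, hab⟩
    · rintro ⟨⟨a,x⟩,b,y⟩ _; rfl
    · rintro ⟨⟨a,x⟩,b,y⟩ _; rfl
    · rintro ⟨⟨a,x⟩,b,y⟩ _
      dsimp only
      ring
  have hdiag : ∑ r ∈ (Qd n).filter (fun r => r.1.1 = r.2.1), (r.1.1:ℂ)^j * (r.2.1:ℂ)^k
      = (n:ℂ) * sg (j + k - 1) n - sg (j + k) n := by
    have hsig := Finset.sum_sigma (n.divisorsAntidiagonal) (fun d => Finset.Ico 1 d.2)
      (fun q => (q.1.1 : ℂ)^j * (q.1.1 : ℂ)^k)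
    have h1 : ∑ r ∈ (Qd n).filter (fun r => r.1.1 = r.2.1), (r.1.1:ℂ)^j * (r.2.1:ℂ)^k
        = ∑ q ∈ (n.divisorsAntidiagonal).sigma (fun d => Finset.Ico 1 d.2),
            (q.1.1 : ℂ)^j * (q.1.1 : ℂ)^k := by
      refine Finset.sum_nbij' (fun r => ⟨(r.1.1, r.1.2 + r.2.2), r.1.2⟩)
        (fun q => ((q.1.1, q.2), (q.1.1, q.1.2 - q.2))) ?_ ?_ ?_ ?_ ?_
      · rintro ⟨⟨a,x⟩,b,y⟩ hp
        simp only [Finset.mem_filter, mem_Qd'] at hp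
        obtain ⟨⟨ha,hx,hb,hy,h⟩,hab⟩ := hp
        simp only [Finset.mem_sigma, Nat.mem_divisorsAntidiagonal, Finset.mem_Ico]
        subst hab
        refine ⟨⟨?_, by have := Nat.mul_pos ha hx; omega⟩, by omega, by omega⟩
        rw [Nat.mul_add]
        omega
      · rintro ⟨⟨a,m⟩,x⟩ hq
        simp only [Finset.mem_sigma, Nat.mem_divisorsAntidiagonal, Finset.mem_Ico] at hq
        obtain ⟨⟨ham, hn⟩, hx1, hxm⟩ := hq
        simp only [Finset.mem_filter, mem_Qd']
        have ha : 0 < a := by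
          rcases Nat.eq_zero_or_pos a with h | h
          · subst h; simp at ham; omega
          · exact h
        refine ⟨⟨ha, by omega, ha, by omega, ?_⟩, trivial⟩
        rw [← Nat.mul_add]
        have : x + (m - x) = m := by omega
        rw [this, ham]
      · rintro ⟨⟨a,x⟩,b,y⟩ hp
        simp only [Finset.mem_filter, mem_Qd'] at hp
        obtain ⟨⟨ha,hx,hb,hy,h⟩,hab⟩ := hp
        have h2 : x + y - x = y := by omega
        simp only [h2, hab]
      · rintro ⟨⟨a,m⟩,x⟩ hq
        simp only [Finset.mem_sigma, Nat.mem_divisorsAntidiagonal, Finset.mem_Ico] at hq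
        obtain ⟨⟨ham, hn⟩, hx1, hxm⟩ := hq
        have h2 : x + (m - x) = m := by omega
        simp only [h2]
      · rintro ⟨⟨a,x⟩,b,y⟩ hp
        simp only [Finset.mem_filter, mem_Qd'] at hp
        obtain ⟨⟨ha,hx,hb,hy,h⟩,hab⟩ := hp
        simp only [← hab]
    rw [h1, hsig]
    have h2 : ∀ d ∈ n.divisorsAntidiagonal,
        (∑ _x ∈ Finset.Ico 1 d.2, (d.1 : ℂ)^j * (d.1 : ℂ)^k)
          = (n : ℂ) * (d.1:ℂ)^(j+k-1) - (d.1:ℂ)^(j+k) := by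
      intro d hd
      obtain ⟨hmul, hn⟩ := Nat.mem_divisorsAntidiagonal.mp hd
      have hd1 : 1 ≤ d.1 := Nat.pos_of_ne_zero (by rintro h; rw [h] at hmul; simp at hmul; omega)
      have hd2 : 1 ≤ d.2 := Nat.pos_of_ne_zero (by rintro h; rw [h] at hmul; simp at hmul; omega)
      rw [Finset.sum_const, Nat.card_Ico, nsmul_eq_mul, Nat.cast_sub hd2]
      have hcast : (d.1 : ℂ) * (d.2 : ℂ) = (n : ℂ) := by
        have : ((d.1 * d.2 : ℕ) : ℂ) = (n : ℂ) := by rw [hmul]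
        push_cast at this
        exact this
      have hpow : (d.1:ℂ)^(j+k) = (d.1:ℂ)^(j+k-1) * (d.1:ℂ) := by
        rw [← pow_succ]
        congr 1
        omega
      rw [← pow_add, hpow, ← hcast]
      ring
    rw [Finset.sum_congr rfl h2, Finset.sum_sub_distrib, ← Finset.mul_sum,
      ← sg_eq_sum_DA, ← sg_eq_sum_DA]
  rw [hsplit, hswap, hdiag]
  simp only [tm]
  ring

lemma S11id (n : ℕ) : Sc 1 1 n
    = ((1:ℂ)/12) * sg 1 n + ((5:ℂ)/12) * sg 3 n - ((1:ℂ)/2) * ((n:ℂ) * sg 1 n) := by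
  have m11 := Mfull 1 1 n; rw [X11, Gc11] at m11
  have m02 := Mfull 0 2 n; rw [X02, Gc02] at m02
  have d11 : Sc 1 1 n = tm 1 1 n + tm 1 1 n + ((n:ℂ) * sg 1 n - sg 2 n) := by
    simpa using D_eq 1 1 n (by omega)
  have d02 : Sc 0 2 n = tm 0 2 n + tm 2 0 n + ((n:ℂ) * sg 1 n - sg 2 n) := by
    simpa using D_eq 0 2 n (by omega)
  linear_combination ((1:ℂ)/2) * m11 + m02 + ((1:ℂ)/2) * d11 - d02

lemma S13id (n : ℕ) : Sc 1 3 n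
    = (-(1:ℂ)/240) * sg 1 n + ((1:ℂ)/24) * sg 3 n + ((7:ℂ)/80) * sg 5 n
      - ((1:ℂ)/8) * ((n:ℂ) * sg 3 n) := by
  have m13 := Mfull 1 3 n; rw [X13, Gc13] at m13
  have m22 := Mfull 2 2 n; rw [X22, Gc22] at m22
  have m04 := Mfull 0 4 n; rw [X04, Gc04] at m04
  have d13 : Sc 1 3 n = tm 1 3 n + tm 3 1 n + ((n:ℂ) * sg 3 n - sg 4 n) := by
    simpa using D_eq 1 3 n (by omega)
  have d22 : Sc 2 2 n = tm 2 2 n + tm 2 2 n + ((n:ℂ) * sg 3 n - sg 4 n) := by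
    simpa using D_eq 2 2 n (by omega)
  have d04 : Sc 0 4 n = tm 0 4 n + tm 4 0 n + ((n:ℂ) * sg 3 n - sg 4 n) := by
    simpa using D_eq 0 4 n (by omega)
  linear_combination ((1:ℂ)/2) * m13 + ((3:ℂ)/8) * m22 + ((1:ℂ)/4) * m04
    + ((1:ℂ)/2) * d13 - ((3:ℂ)/8) * d22 - ((1:ℂ)/4) * d04

lemma S33id (n : ℕ) : Sc 3 3 n = (-(1:ℂ)/120) * sg 3 n + ((1:ℂ)/120) * sg 7 n := by
  have m33 := Mfull 3 3 n; rw [X33, Gc33] at m33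
  have m24 := Mfull 2 4 n; rw [X24, Gc24] at m24
  have d33 : Sc 3 3 n = tm 3 3 n + tm 3 3 n + ((n:ℂ) * sg 5 n - sg 6 n) := by
    simpa using D_eq 3 3 n (by omega)
  have d24 : Sc 2 4 n = tm 2 4 n + tm 4 2 n + ((n:ℂ) * sg 5 n - sg 6 n) := by
    simpa using D_eq 2 4 n (by omega)
  linear_combination ((1:ℂ)/2) * m33 + ((1:ℂ)/2) * m24 + ((1:ℂ)/2) * d33 - ((1:ℂ)/2) * d24

lemma S15id (n : ℕ) : Sc 1 5 n
    = ((1:ℂ)/504) * sg 1 n + ((1:ℂ)/24) * sg 5 n + ((5:ℂ)/126) * sg 7 n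
      - ((1:ℂ)/12) * ((n:ℂ) * sg 5 n) := by
  have m24 := Mfull 2 4 n; rw [X24, Gc24] at m24
  have m15 := Mfull 1 5 n; rw [X15, Gc15] at m15
  have m06 := Mfull 0 6 n; rw [X06, Gc06] at m06
  have d24 : Sc 2 4 n = tm 2 4 n + tm 4 2 n + ((n:ℂ) * sg 5 n - sg 6 n) := by
    simpa using D_eq 2 4 n (by omega)
  have d15 : Sc 1 5 n = tm 1 5 n + tm 5 1 n + ((n:ℂ) * sg 5 n - sg 6 n) := by
    simpa using D_eq 1 5 n (by omega)
  have d06 : Sc 0 6 n = tm 0 6 n + tm 6 0 n + ((n:ℂ) * sg 5 n - sg 6 n) := by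
    simpa using D_eq 0 6 n (by omega)
  linear_combination ((5:ℂ)/12) * m24 + ((1:ℂ)/2) * m15 + ((1:ℂ)/6) * m06
    - ((5:ℂ)/12) * d24 + ((1:ℂ)/2) * d15 - ((1:ℂ)/6) * d06

lemma coeff_Dq (n : ℕ) (F : PowerSeries ℂ) :
    PowerSeries.coeff n (Dq F) = (n : ℂ) * PowerSeries.coeff n F := by
  simp [Dq]

lemma Dq_mul (F G : PowerSeries ℂ) : Dq (F * G) = Dq F * G + F * Dq G := by
  ext n
  rw [map_add, coeff_Dq, PowerSeries.coeff_mul, PowerSeries.coeff_mul, PowerSeries.coeff_mul,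
    Finset.mul_sum, ← Finset.sum_add_distrib]
  refine Finset.sum_congr rfl ?_
  rintro ⟨i, l⟩ hil
  rw [Finset.HasAntidiagonal.mem_antidiagonal] at hil
  rw [coeff_Dq, coeff_Dq]
  have : (n : ℂ) = (i : ℂ) + (l : ℂ) := by rw [← hil]; push_cast; ring
  rw [this]; ring

lemma Dq_one : Dq 1 = 0 := by
  ext n
  rw [coeff_Dq, PowerSeries.coeff_one]
  rcases eq_or_ne n 0 with rfl | h
  · simp
  · simp [h]

lemma Dq_pow_succ (F : PowerSeries ℂ) (k : ℕ) :
    Dq (F ^ (k + 1)) = PowerSeries.C (R := ℂ) (k + 1 : ℕ) * (F ^ k * Dq F) := by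
  induction k with
  | zero => simp [Dq_mul]
  | succ k ih =>
      rw [pow_succ, Dq_mul, ih]
      have : (((k + 1 + 1 : ℕ)) : ℂ) = ((k + 1 : ℕ) : ℂ) + 1 := by push_cast; ring
      rw [show (PowerSeries.C (R := ℂ) (k + 1 + 1 : ℕ)) = PowerSeries.C (R := ℂ) ((k + 1 : ℕ) : ℂ)
        + PowerSeries.C (R := ℂ) 1 from by rw [← map_add]; exact congrArg _ (by push_cast; ring)]
      rw [map_one, pow_succ]
      ring

lemma Dq_pow (F : PowerSeries ℂ) (k : ℕ) :
    Dq (F ^ k) = PowerSeries.C (R := ℂ) (k : ℕ) * (F ^ (k - 1) * Dq F) := by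
  rcases k with _ | k
  · simp [Dq_one]
  · rw [Dq_pow_succ]; rfl

lemma coeff_Phi_mul (j k n : ℕ) :
    PowerSeries.coeff n (Phi j * Phi k) = Sc j k n := by
  rw [PowerSeries.coeff_mul]
  rw [Finset.sum_congr rfl (fun il _ => by rw [coeff_Phi, coeff_Phi])]
  exact Sc_eq j k n

lemma B1 : Dq (Phi 1) = PowerSeries.C (R := ℂ) (1/6) * Phi 1 + PowerSeries.C (R := ℂ) (5/6) * Phi 3
    - PowerSeries.C (R := ℂ) 2 * (Phi 1 * Phi 1) := by
  ext n
  rw [coeff_Dq, map_sub, map_add, PowerSeries.coeff_C_mul, PowerSeries.coeff_C_mul,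
    PowerSeries.coeff_C_mul, coeff_Phi, coeff_Phi, coeff_Phi_mul]
  linear_combination (2:ℂ) * S11id n

lemma B2 : Dq (Phi 3) = PowerSeries.C (R := ℂ) (-(1/30)) * Phi 1 + PowerSeries.C (R := ℂ) (1/3) * Phi 3
    + PowerSeries.C (R := ℂ) (7/10) * Phi 5 - PowerSeries.C (R := ℂ) 8 * (Phi 1 * Phi 3) := by
  ext n
  rw [coeff_Dq, map_sub, map_add, map_add, PowerSeries.coeff_C_mul, PowerSeries.coeff_C_mul,
    PowerSeries.coeff_C_mul, PowerSeries.coeff_C_mul, coeff_Phi, coeff_Phi, coeff_Phi,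
    coeff_Phi_mul]
  linear_combination (8:ℂ) * S13id n

lemma B3 : Dq (Phi 5) = PowerSeries.C (R := ℂ) (1/42) * Phi 1 + PowerSeries.C (R := ℂ) (10/21) * Phi 3
    + PowerSeries.C (R := ℂ) (1/2) * Phi 5 + PowerSeries.C (R := ℂ) (400/7) * (Phi 3 * Phi 3)
    - PowerSeries.C (R := ℂ) 12 * (Phi 1 * Phi 5) := by
  ext n
  rw [coeff_Dq, map_sub, map_add, map_add, map_add, PowerSeries.coeff_C_mul,
    PowerSeries.coeff_C_mul, PowerSeries.coeff_C_mul, PowerSeries.coeff_C_mul,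
    PowerSeries.coeff_C_mul, coeff_Phi, coeff_Phi, coeff_Phi,
    coeff_Phi_mul, coeff_Phi_mul]
  linear_combination (-(400:ℂ)/7) * S33id n + (12:ℂ) * S15id n

def pN (n : ℕ) : ℕ := Fintype.card (Nat.Partition n)

def addRep (n d m : ℕ) (hd : 0 < d) (hdm : d * m ≤ n) (mu : Nat.Partition (n - d * m)) :
    Nat.Partition n where
  parts := mu.parts + Multiset.replicate m d
  parts_pos := fun {i} hi => by
    rcases Multiset.mem_add.mp hi with h | h
    · exact mu.parts_pos h
    · rw [Multiset.eq_of_mem_replicate h]; exact hd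
  parts_sum := by
    rw [Multiset.sum_add, mu.parts_sum, Multiset.sum_replicate, smul_eq_mul,
      Nat.mul_comm m d]
    omega

def subRep (n d m : ℕ) (lam : Nat.Partition n) (h : Multiset.replicate m d ≤ lam.parts) :
    Nat.Partition (n - d * m) where
  parts := lam.parts - Multiset.replicate m d
  parts_pos := fun {i} hi => lam.parts_pos (Multiset.mem_of_le (tsub_le_self) hi)
  parts_sum := by
    have h2 : (lam.parts - Multiset.replicate m d) + Multiset.replicate m d = lam.parts :=
      tsub_add_cancel_of_le h
    have h3 := congrArg Multiset.sum h2
    rw [Multiset.sum_add, Multiset.sum_replicate, smul_eq_mul, Nat.mul_comm m d,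
      lam.parts_sum] at h3
    omega

lemma count_mul_le (n d : ℕ) (lam : Nat.Partition n) :
    d * Multiset.count d lam.parts ≤ n := by
  have hr : Multiset.replicate (Multiset.count d lam.parts) d ≤ lam.parts :=
    Multiset.le_count_iff_replicate_le.mp le_rfl
  have h2 := congrArg Multiset.sum (tsub_add_cancel_of_le hr)
  rw [Multiset.sum_add, Multiset.sum_replicate, smul_eq_mul,
    Nat.mul_comm (Multiset.count d lam.parts) d, lam.parts_sum] at h2
  omega

lemma card_part_count (n d m : ℕ) (hd : 0 < d) (hm : 0 < m) (hdm : d * m ≤ n) :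
    (Finset.univ.filter
        (fun lam : Nat.Partition n => m ≤ Multiset.count d lam.parts)).card
      = pN (n - d * m) := by
  rw [pN, Fintype.card]
  refine Finset.card_bij'
    (fun lam hlam => subRep n d m lam (Multiset.le_count_iff_replicate_le.mp
      (Finset.mem_filter.mp hlam).2))
    (fun mu _ => addRep n d m hd hdm mu) (fun _ _ => Finset.mem_univ _) ?_ ?_ ?_
  · intro mu _
    rw [Finset.mem_filter]
    refine ⟨Finset.mem_univ _, ?_⟩
    simp only [addRep, Multiset.count_add, Multiset.count_replicate_self]
    omega
  · intro lam hlam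
    apply Nat.Partition.ext
    simp only [addRep, subRep]
    exact tsub_add_cancel_of_le (Multiset.le_count_iff_replicate_le.mp
      (Finset.mem_filter.mp hlam).2)
  · intro mu _
    apply Nat.Partition.ext
    simp only [addRep, subRep]
    exact add_tsub_cancel_right _ _

lemma inner_sum (n d : ℕ) (hd : 0 < d) :
    ∑ m ∈ (Finset.Icc 1 n).filter (fun m => d * m ≤ n), pN (n - d * m)
      = ∑ lam : Nat.Partition n, Multiset.count d lam.parts := by
  have h1 : ∀ m ∈ (Finset.Icc 1 n).filter (fun m => d * m ≤ n),
      pN (n - d * m) = (Finset.univ.filter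
        (fun lam : Nat.Partition n => m ≤ Multiset.count d lam.parts)).card := by
    intro m hm
    rw [Finset.mem_filter, Finset.mem_Icc] at hm
    exact (card_part_count n d m hd (by omega) hm.2).symm
  rw [Finset.sum_congr rfl h1]
  rw [Finset.sum_subset (Finset.filter_subset _ _) ?_]
  · simp only [Finset.card_filter]
    rw [Finset.sum_comm]
    refine Finset.sum_congr rfl (fun lam _ => ?_)
    rw [← Finset.card_filter]
    have hc : d * Multiset.count d lam.parts ≤ n := count_mul_le n d lam
    have hcle : Multiset.count d lam.parts ≤ d * Multiset.count d lam.parts :=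
      Nat.le_mul_of_pos_left _ hd
    have heq : (Finset.Icc 1 n).filter (fun m => m ≤ Multiset.count d lam.parts)
        = Finset.Icc 1 (Multiset.count d lam.parts) := by
      ext k
      simp only [Finset.mem_filter, Finset.mem_Icc]
      omega
    rw [heq, Nat.card_Icc]
    omega
  · intro m hmI hmnot
    rw [Finset.mem_filter] at hmnot
    have hdm : ¬ d * m ≤ n := by tauto
    rw [Finset.card_eq_zero, Finset.filter_eq_empty_iff]
    intro lam _
    intro hcnt
    have hc := count_mul_le n d lam
    have : d * m ≤ d * Multiset.count d lam.parts := Nat.mul_le_mul_left d hcnt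
    omega

lemma per_lam (n : ℕ) (lam : Nat.Partition n) :
    ∑ d ∈ Finset.Icc 1 n, d * Multiset.count d lam.parts = n := by
  have hsub : lam.parts.toFinset ⊆ Finset.Icc 1 n := by
    intro d hd
    rw [Multiset.mem_toFinset] at hd
    have h1 := lam.parts_pos hd
    have h2 : d ≤ lam.parts.sum := Multiset.single_le_sum (fun x _ => Nat.zero_le x) d hd
    rw [lam.parts_sum] at h2
    exact Finset.mem_Icc.mpr ⟨h1, h2⟩
  calc ∑ d ∈ Finset.Icc 1 n, d * Multiset.count d lam.parts
      = ∑ d ∈ lam.parts.toFinset, d * Multiset.count d lam.parts := by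
        refine (Finset.sum_subset hsub (fun x _ hx => ?_)).symm
        rw [Multiset.count_eq_zero_of_notMem (by simpa [Multiset.mem_toFinset] using hx)]
        ring
    _ = lam.parts.sum := by
        rw [Finset.sum_multiset_count lam.parts]
        exact Finset.sum_congr rfl (fun d _ => by rw [smul_eq_mul]; ring)
    _ = n := lam.parts_sum

lemma keyN (n : ℕ) :
    (∑ il ∈ Finset.HasAntidiagonal.antidiagonal n, pN il.1 * (∑ u ∈ il.2.divisorsAntidiagonal, u.1))
      = n * pN n := by
  have hmul : ∀ il : ℕ × ℕ, pN il.1 * (∑ u ∈ il.2.divisorsAntidiagonal, u.1)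
      = ∑ u ∈ il.2.divisorsAntidiagonal, pN il.1 * u.1 := fun il => Finset.mul_sum _ _ _
  rw [Finset.sum_congr rfl (fun il _ => hmul il)]
  have hsig := Finset.sum_sigma (Finset.HasAntidiagonal.antidiagonal n)
    (fun il => il.2.divisorsAntidiagonal) (fun q => pN q.1.1 * q.2.1)
  rw [← hsig]
  have hbij : ∑ q ∈ (Finset.HasAntidiagonal.antidiagonal n).sigma (fun il => il.2.divisorsAntidiagonal),
      pN q.1.1 * q.2.1
      = ∑ q ∈ (Finset.Icc 1 n).sigma
          (fun d => (Finset.Icc 1 n).filter (fun m => d * m ≤ n)),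
          q.1 * pN (n - q.1 * q.2) := by
    refine Finset.sum_nbij' (fun q => ⟨q.2.1, q.2.2⟩)
      (fun q => ⟨(n - q.1 * q.2, q.1 * q.2), (q.1, q.2)⟩) ?_ ?_ ?_ ?_ ?_
    · rintro ⟨⟨i, l⟩, ⟨d, m⟩⟩ hq
      simp only [Finset.mem_sigma, Finset.HasAntidiagonal.mem_antidiagonal,
        Nat.mem_divisorsAntidiagonal] at hq
      obtain ⟨hil, hdm, hl0⟩ := hq
      have hd : 0 < d := Nat.pos_of_ne_zero (by rintro rfl; simp_all)
      have hm : 0 < m := Nat.pos_of_ne_zero (by rintro rfl; simp_all)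
      simp only [Finset.mem_sigma, Finset.mem_filter, Finset.mem_Icc]
      have h1 : d * 1 ≤ d * m := Nat.mul_le_mul_left d hm
      have h2 : 1 * m ≤ d * m := Nat.mul_le_mul_right m hd
      simp only [mul_one, one_mul] at h1 h2
      exact ⟨⟨by omega, by omega⟩, ⟨by omega, by omega⟩, by omega⟩
    · rintro ⟨d, m⟩ hq
      simp only [Finset.mem_sigma, Finset.mem_filter, Finset.mem_Icc] at hq
      obtain ⟨⟨hd1, hdn⟩, ⟨hm1, hmn⟩, hdm⟩ := hq
      simp only [Finset.mem_sigma, Finset.HasAntidiagonal.mem_antidiagonal, Nat.mem_divisorsAntidiagonal]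
      refine ⟨by omega, trivial, Nat.mul_ne_zero (by omega) (by omega)⟩
    · rintro ⟨⟨i, l⟩, ⟨d, m⟩⟩ hq
      simp only [Finset.mem_sigma, Finset.HasAntidiagonal.mem_antidiagonal,
        Nat.mem_divisorsAntidiagonal] at hq
      obtain ⟨hil, hdm, hl0⟩ := hq
      have h2 : n - l = i := by omega
      simp only [hdm, h2]
    · rintro ⟨d, m⟩ _; rfl
    · rintro ⟨⟨i, l⟩, ⟨d, m⟩⟩ hq
      simp only [Finset.mem_sigma, Finset.HasAntidiagonal.mem_antidiagonal,
        Nat.mem_divisorsAntidiagonal] at hq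
      obtain ⟨hil, hdm, hl0⟩ := hq
      have h2 : n - l = i := by omega
      simp only [hdm, h2]
      ring
  rw [hbij, Finset.sum_sigma]
  have hinner : ∀ d ∈ Finset.Icc 1 n,
      (∑ m ∈ (Finset.Icc 1 n).filter (fun m => d * m ≤ n), d * pN (n - d * m))
        = d * ∑ lam : Nat.Partition n, Multiset.count d lam.parts := by
    intro d hd
    rw [Finset.mem_Icc] at hd
    rw [← Finset.mul_sum, inner_sum n d (by omega)]
  rw [Finset.sum_congr rfl hinner]
  have hswap : ∑ d ∈ Finset.Icc 1 n, d * ∑ lam : Nat.Partition n,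
      Multiset.count d lam.parts
      = ∑ lam : Nat.Partition n, ∑ d ∈ Finset.Icc 1 n, d * Multiset.count d lam.parts := by
    rw [Finset.sum_congr rfl (fun d _ => Finset.mul_sum _ _ _)]
    exact Finset.sum_comm
  rw [hswap, Finset.sum_congr rfl (fun lam _ => per_lam n lam), Finset.sum_const,
    Finset.card_univ, smul_eq_mul]
  simp [pN, mul_comm]

lemma DqP : Dq Pser = Pser * Phi 1 := by
  ext n
  rw [coeff_Dq, PowerSeries.coeff_mul]
  have hP : ∀ k, PowerSeries.coeff k Pser = (pN k : ℂ) := by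
    intro k; simp [Pser, pN]
  have hcast : ∀ il : ℕ × ℕ,
      PowerSeries.coeff il.1 Pser * PowerSeries.coeff il.2 (Phi 1)
        = ((pN il.1 * (∑ u ∈ il.2.divisorsAntidiagonal, u.1) : ℕ) : ℂ) := by
    intro il
    rw [hP, coeff_Phi, sg_eq_sum_DA]
    push_cast
    simp [pow_one]
  rw [Finset.sum_congr rfl (fun il _ => hcast il), ← Nat.cast_sum, keyN n, hP]
  push_cast
  ring


def gen (m : ℕ) : Set (PowerSeries ℂ) :=
  {f : PowerSeries ℂ | ∃ a b c : ℕ,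
    0 < a + 2 * b + 3 * c ∧ a + 2 * b + 3 * c ≤ m ∧
    f = Phi 1 ^ a * Phi 3 ^ b * Phi 5 ^ c}

lemma mon_mem {m a b c : ℕ} (h1 : 0 < a + 2 * b + 3 * c) (h2 : a + 2 * b + 3 * c ≤ m) :
    Phi 1 ^ a * Phi 3 ^ b * Phi 5 ^ c ∈ Submodule.span ℂ (gen m) :=
  Submodule.subset_span ⟨a, b, c, h1, h2, rfl⟩

lemma Cmul_mem {m : ℕ} {x : PowerSeries ℂ} (r : ℂ) (h : x ∈ Submodule.span ℂ (gen m)) :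
    PowerSeries.C (R := ℂ) r * x ∈ Submodule.span ℂ (gen m) := by
  rw [← PowerSeries.smul_eq_C_mul]
  exact Submodule.smul_mem _ _ h

lemma Dq_zero : Dq 0 = 0 := by
  ext n; simp [coeff_Dq]

lemma Dq_add (F G : PowerSeries ℂ) : Dq (F + G) = Dq F + Dq G := by
  ext n; simp [coeff_Dq]; ring

lemma Dq_C_mul (r : ℂ) (F : PowerSeries ℂ) :
    Dq (PowerSeries.C (R := ℂ) r * F) = PowerSeries.C (R := ℂ) r * Dq F := by
  ext n
  rw [coeff_Dq, PowerSeries.coeff_C_mul, PowerSeries.coeff_C_mul, coeff_Dq]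
  ring

lemma Dq_smul (r : ℂ) (F : PowerSeries ℂ) : Dq (r • F) = r • Dq F := by
  rw [PowerSeries.smul_eq_C_mul, PowerSeries.smul_eq_C_mul, Dq_C_mul]

lemma Dq_mon_mem {m a b c : ℕ} (h1 : 0 < a + 2 * b + 3 * c) (h2 : a + 2 * b + 3 * c ≤ m) :
    Dq (Phi 1 ^ a * Phi 3 ^ b * Phi 5 ^ c) ∈ Submodule.span ℂ (gen (m + 1)) := by
  have hD : Dq (Phi 1 ^ a * Phi 3 ^ b * Phi 5 ^ c)
      = PowerSeries.C (R := ℂ) (a : ℂ) * ((Phi 1 ^ (a - 1) * Phi 3 ^ b * Phi 5 ^ c) * Dq (Phi 1))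
        + PowerSeries.C (R := ℂ) (b : ℂ) * ((Phi 1 ^ a * Phi 3 ^ (b - 1) * Phi 5 ^ c) * Dq (Phi 3))
        + PowerSeries.C (R := ℂ) (c : ℂ) * ((Phi 1 ^ a * Phi 3 ^ b * Phi 5 ^ (c - 1)) * Dq (Phi 5)) := by
    rw [Dq_mul, Dq_mul, Dq_pow, Dq_pow, Dq_pow]
    ring
  rw [hD]
  refine Submodule.add_mem _ (Submodule.add_mem _ ?_ ?_) ?_
  · rcases Nat.eq_zero_or_pos a with ha | ha
    · subst ha; simp only [Nat.cast_zero, map_zero, zero_mul]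
      exact Submodule.zero_mem _
    · apply Cmul_mem
      obtain ⟨a', rfl⟩ : ∃ a', a = a' + 1 := ⟨a - 1, by omega⟩
      have e1 : (Phi 1 ^ (a' + 1 - 1) * Phi 3 ^ b * Phi 5 ^ c) * Dq (Phi 1)
          = PowerSeries.C (R := ℂ) (1/6) * (Phi 1 ^ (a' + 1) * Phi 3 ^ b * Phi 5 ^ c)
            + PowerSeries.C (R := ℂ) (5/6) * (Phi 1 ^ a' * Phi 3 ^ (b + 1) * Phi 5 ^ c)
            - PowerSeries.C (R := ℂ) 2 * (Phi 1 ^ (a' + 2) * Phi 3 ^ b * Phi 5 ^ c) := by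
        rw [B1]
        simp only [Nat.add_sub_cancel]
        ring
      rw [e1]
      refine Submodule.sub_mem _ (Submodule.add_mem _ ?_ ?_) ?_ <;>
        exact Cmul_mem _ (mon_mem (by omega) (by omega))
  · rcases Nat.eq_zero_or_pos b with hb | hb
    · subst hb; simp only [Nat.cast_zero, map_zero, zero_mul]
      exact Submodule.zero_mem _
    · apply Cmul_mem
      obtain ⟨b', rfl⟩ : ∃ b', b = b' + 1 := ⟨b - 1, by omega⟩
      have e2 : (Phi 1 ^ a * Phi 3 ^ (b' + 1 - 1) * Phi 5 ^ c) * Dq (Phi 3)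
          = PowerSeries.C (R := ℂ) (-(1/30)) * (Phi 1 ^ (a + 1) * Phi 3 ^ b' * Phi 5 ^ c)
            + PowerSeries.C (R := ℂ) (1/3) * (Phi 1 ^ a * Phi 3 ^ (b' + 1) * Phi 5 ^ c)
            + PowerSeries.C (R := ℂ) (7/10) * (Phi 1 ^ a * Phi 3 ^ b' * Phi 5 ^ (c + 1))
            - PowerSeries.C (R := ℂ) 8 * (Phi 1 ^ (a + 1) * Phi 3 ^ (b' + 1) * Phi 5 ^ c) := by
        rw [B2]
        simp only [Nat.add_sub_cancel]
        ring
      rw [e2]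
      refine Submodule.sub_mem _ (Submodule.add_mem _ (Submodule.add_mem _ ?_ ?_) ?_) ?_ <;>
        exact Cmul_mem _ (mon_mem (by omega) (by omega))
  · rcases Nat.eq_zero_or_pos c with hc | hc
    · subst hc; simp only [Nat.cast_zero, map_zero, zero_mul]
      exact Submodule.zero_mem _
    · apply Cmul_mem
      obtain ⟨c', rfl⟩ : ∃ c', c = c' + 1 := ⟨c - 1, by omega⟩
      have e3 : (Phi 1 ^ a * Phi 3 ^ b * Phi 5 ^ (c' + 1 - 1)) * Dq (Phi 5)
          = PowerSeries.C (R := ℂ) (1/42) * (Phi 1 ^ (a + 1) * Phi 3 ^ b * Phi 5 ^ c')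
            + PowerSeries.C (R := ℂ) (10/21) * (Phi 1 ^ a * Phi 3 ^ (b + 1) * Phi 5 ^ c')
            + PowerSeries.C (R := ℂ) (1/2) * (Phi 1 ^ a * Phi 3 ^ b * Phi 5 ^ (c' + 1))
            + PowerSeries.C (R := ℂ) (400/7) * (Phi 1 ^ a * Phi 3 ^ (b + 2) * Phi 5 ^ c')
            - PowerSeries.C (R := ℂ) 12 * (Phi 1 ^ (a + 1) * Phi 3 ^ b * Phi 5 ^ (c' + 1)) := by
        rw [B3]
        simp only [Nat.add_sub_cancel]
        ring
      rw [e3]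
      refine Submodule.sub_mem _
        (Submodule.add_mem _ (Submodule.add_mem _ (Submodule.add_mem _ ?_ ?_) ?_) ?_) ?_ <;>
        exact Cmul_mem _ (mon_mem (by omega) (by omega))

lemma step_mem {m : ℕ} {Φ : PowerSeries ℂ} (h : Φ ∈ Submodule.span ℂ (gen m)) :
    Phi 1 * Φ + Dq Φ ∈ Submodule.span ℂ (gen (m + 1)) := by
  refine Submodule.add_mem _ ?_ ?_
  · refine Submodule.span_induction ?_ ?_ ?_ ?_ h
    · rintro x ⟨a, b, c, h1, h2, rfl⟩
      have e : Phi 1 * (Phi 1 ^ a * Phi 3 ^ b * Phi 5 ^ c)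
          = Phi 1 ^ (a + 1) * Phi 3 ^ b * Phi 5 ^ c := by ring
      rw [e]
      exact mon_mem (by omega) (by omega)
    · rw [mul_zero]; exact Submodule.zero_mem _
    · intro x y _ _ hx hy
      rw [mul_add]; exact Submodule.add_mem _ hx hy
    · intro r x _ hx
      rw [mul_smul_comm]; exact Submodule.smul_mem _ _ hx
  · refine Submodule.span_induction ?_ ?_ ?_ ?_ h
    · rintro x ⟨a, b, c, h1, h2, rfl⟩
      exact Dq_mon_mem h1 h2
    · rw [Dq_zero]; exact Submodule.zero_mem _
    · intro x y _ _ hx hy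
      rw [Dq_add]; exact Submodule.add_mem _ hx hy
    · intro r x _ hx
      rw [Dq_smul]; exact Submodule.smul_mem _ _ hx


end Aux9

/-- For every `m ≥ 1` there is a `ℂ`-linear combination `Φ` of the monomials
`Φ₁^a Φ₃^b Φ₅^c` with `0 < a + 2b + 3c ≤ m` such that `δ_q^m(P) = P·Φ`. -/
theorem stmt_9 (m : ℕ) (hm : 1 ≤ m) :
    ∃ Φ ∈ Submodule.span ℂ
        {f : PowerSeries ℂ | ∃ a b c : ℕ,
          0 < a + 2 * b + 3 * c ∧ a + 2 * b + 3 * c ≤ m ∧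
          f = Phi 1 ^ a * Phi 3 ^ b * Phi 5 ^ c},
      Dq^[m] Pser = Pser * Φ := by
  induction m with
  | zero => omega
  | succ m ih =>
      rcases Nat.eq_zero_or_pos m with rfl | hm'
      · refine ⟨Phi 1, ?_, ?_⟩
        · exact Submodule.subset_span ⟨1, 0, 0, by norm_num, by norm_num, by simp⟩
        · simpa using Aux9.DqP
      · obtain ⟨Φ, hΦ, hEq⟩ := ih hm'
        refine ⟨Phi 1 * Φ + Dq Φ, ?_, ?_⟩
        · exact Aux9.step_mem hΦ
        · rw [Function.iterate_succ_apply', hEq, Aux9.Dq_mul, Aux9.DqP]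
          ring
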